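/- Fix π_{l+1},...,πₘ and let v = (u_{k₁},...,u_{k_l}) with k₁ < ... < k_l. The set of non-decreasing l-tuples w such that (w, π_{l+1},...,πₘ) is a u-parking function equals the lower set [v] = {w : wᵢ ≤ vᵢ for all i} if and only if (π_{l+1},...,πₘ) is a multi-shuffle in MS(v), i.e., it is a permutation of the union of l+1 words α₁, α₂+(u_{k₁},...,u_{k₁}), ..., α_{l+1}+(u_{k_l},...,u_{k_l}), where α₁ ∈ PF(u₁,...,u_{k₁−1}), α_j ∈ PF(u_{k_{j−1}+1}−u_{k_{j−1}},...,u_{k_j−1}−u_{k_{j−1}}) for 2 ≤ j ≤ l, and α_{l+1} ∈ PF(u_{k_l+1}−u_{k_l},...,uₘ−u_{k_l}). -/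

import Mathlib

/-- A `us`-parking function as a list: positive entries whose non-decreasing
rearrangement is component-wise bounded by `us`. -/
def IsPFL (us w : List ℕ) : Prop :=
  (∀ x ∈ w, 0 < x) ∧ ∃ w' : List ℕ, w.Perm w' ∧ w'.Pairwise (· ≤ ·) ∧
    List.Forall₂ (· ≤ ·) w' us

/-- Interleave blocks `B 0, B 1, ...` with separators `v`:
`interleave [B₀,...,B_l] [v₁,...,v_l] = B₀ ++ v₁ :: B₁ ++ v₂ :: ⋯ ++ v_l :: B_l`. -/
def interleave : List (List ℕ) → List ℕ → List ℕ
  | B :: Bs, x :: xs => B ++ x :: interleave Bs xs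
  | B :: _, [] => B
  | [], _ => []

/-- `t` is a multi-shuffle in `MS(v)`: `u` decomposes into blocks around the entries of `v`,
and `t` is a permutation of the union of words `α₁, α₂ + v₁, ..., α_{l+1} + v_l`, where each
shifted-back word `α_j` is a parking function for the corresponding shifted `u`-segment. -/
def MShuffle (u v t : List ℕ) : Prop :=
  ∃ B w : List (List ℕ), B.length = v.length + 1 ∧ w.length = v.length + 1 ∧
    u = interleave B v ∧
    (∀ j < v.length + 1,
      (∀ x ∈ w.getD j [], (if j = 0 then 0 else v.getD (j - 1) 0) < x) ∧
      IsPFL ((B.getD j []).map (fun y => y - (if j = 0 then 0 else v.getD (j - 1) 0)))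
            ((w.getD j []).map (fun y => y - (if j = 0 then 0 else v.getD (j - 1) 0)))) ∧
    t.Perm w.flatten

open List



/-- count of entries `≤ c` -/
def cnt (s : List ℕ) (c : ℕ) : ℕ := s.countP (fun x => decide (x ≤ c))

lemma cnt_nil (c : ℕ) : cnt [] c = 0 := rfl

lemma cnt_cons (a : ℕ) (s : List ℕ) (c : ℕ) :
    cnt (a :: s) c = cnt s c + if a ≤ c then 1 else 0 := by
  simp [cnt, List.countP_cons]

lemma cnt_append (s r : List ℕ) (c : ℕ) : cnt (s ++ r) c = cnt s c + cnt r c :=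
  List.countP_append

lemma cnt_perm {s r : List ℕ} (h : s.Perm r) (c : ℕ) : cnt s c = cnt r c :=
  h.countP_eq _

lemma cnt_le_length (s : List ℕ) (c : ℕ) : cnt s c ≤ s.length :=
  List.countP_le_length

lemma cnt_mono (s : List ℕ) {c c' : ℕ} (h : c ≤ c') : cnt s c ≤ cnt s c' := by
  induction s with
  | nil => simp [cnt_nil]
  | cons a s ih => rw [cnt_cons, cnt_cons]; split <;> split <;> omega

lemma cnt_eq_length (s : List ℕ) (c : ℕ) (h : ∀ x ∈ s, x ≤ c) : cnt s c = s.length :=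
  List.countP_eq_length.2 (fun a ha => by simpa using h a ha)

lemma cnt_eq_zero (s : List ℕ) (c : ℕ) (h : ∀ x ∈ s, c < x) : cnt s c = 0 :=
  List.countP_eq_zero.2 (fun a ha => by simpa using Nat.not_le.2 (h a ha))

lemma all_le_of_cnt_ge (s : List ℕ) (c : ℕ) (h : s.length ≤ cnt s c) : ∀ x ∈ s, x ≤ c := by
  have := List.countP_eq_length.1 (le_antisymm (cnt_le_length s c) h)
  intro x hx; simpa using this x hx

lemma forall₂_cnt {a b : List ℕ} (h : List.Forall₂ (· ≤ ·) a b) (c : ℕ) :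
    cnt b c ≤ cnt a c := by
  induction h with
  | nil => simp [cnt_nil]
  | cons hxy _ ih => rw [cnt_cons, cnt_cons]; split <;> split <;> omega

/-- generic monotone predicate count lemmas on sorted lists -/
lemma sorted_countP_ge (q : ℕ → Bool) (hq : ∀ {y z : ℕ}, y ≤ z → q z = true → q y = true)
    {v : List ℕ} (hs : v.Pairwise (· ≤ ·)) :
    ∀ {i : ℕ} (hi : i < v.length), q v[i] = true → i + 1 ≤ v.countP q := by
  induction v with
  | nil => intro i hi; simp at hi
  | cons a v ih =>
    intro i hi hqi
    rw [List.pairwise_cons] at hs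
    rcases i with _ | i
    · simp only [List.getElem_cons_zero] at hqi
      rw [List.countP_cons, hqi]; simp
    · simp only [List.getElem_cons_succ] at hqi
      have := ih hs.2 (by simpa using Nat.lt_of_succ_lt_succ hi) hqi
      have ha : q a = true := hq (hs.1 _ (List.getElem_mem _)) hqi
      rw [List.countP_cons, ha]; simp; omega

lemma sorted_countP_le (q : ℕ → Bool) (hq : ∀ {y z : ℕ}, y ≤ z → q z = true → q y = true)
    {v : List ℕ} (hs : v.Pairwise (· ≤ ·)) :
    ∀ {i : ℕ} (hi : i < v.length), q v[i] = false → v.countP q ≤ i := by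
  induction v with
  | nil => intro i hi; simp at hi
  | cons a v ih =>
    intro i hi hqi
    rw [List.pairwise_cons] at hs
    rcases i with _ | i
    · simp only [List.getElem_cons_zero] at hqi
      -- all elements fail q
      have : ∀ x ∈ a :: v, q x = false := by
        intro x hx
        rcases List.mem_cons.1 hx with rfl | hx
        · exact hqi
        · by_contra h
          have hx' : q x = true := by revert h; cases q x <;> simp
          have h2 : q a = true := hq (hs.1 _ hx) hx'
          simp [h2] at hqi
      have hz : List.countP q (a :: v) = 0 :=
        List.countP_eq_zero.2 (fun x hx => by simp [this x hx])
      omega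
    · simp only [List.getElem_cons_succ] at hqi
      have := ih hs.2 (by simpa using Nat.lt_of_succ_lt_succ hi) hqi
      rw [List.countP_cons]; split <;> omega

lemma sorted_cnt_ge {v : List ℕ} (hs : v.Pairwise (· ≤ ·)) {i : ℕ} (hi : i < v.length)
    {c : ℕ} (h : v[i] ≤ c) : i + 1 ≤ cnt v c :=
  sorted_countP_ge _ (fun hyz hz => by simp at hz ⊢; omega) hs hi (by simpa using h)

lemma sorted_cnt_le {v : List ℕ} (hs : v.Pairwise (· ≤ ·)) {i : ℕ} (hi : i < v.length)
    {c : ℕ} (h : c < v[i]) : cnt v c ≤ i :=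
  sorted_countP_le _ (fun hyz hz => by simp at hz ⊢; omega) hs hi (by simpa using Nat.not_le.2 h)

lemma sorted_lt_cnt_self {v : List ℕ} (hs : v.Pairwise (· < ·)) {i : ℕ} (hi : i < v.length) :
    cnt v v[i] = i + 1 := by
  have hle : v.Pairwise (· ≤ ·) := hs.imp le_of_lt
  have h1 : i + 1 ≤ cnt v v[i] := sorted_cnt_ge hle hi le_rfl
  have h2 : cnt v v[i] ≤ i + 1 := by
    by_cases h : i + 1 < v.length
    · exact sorted_cnt_le hle h (hs.rel_get_of_lt (by exact Nat.lt_succ_self i))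
    · have : v.length ≤ i + 1 := by omega
      exact le_trans (cnt_le_length _ _) this
  omega

lemma cnt_exists_sorted (u s : List ℕ) (hu : u.Pairwise (· ≤ ·)) (hl : s.length = u.length) :
    (∃ w', s.Perm w' ∧ w'.Pairwise (· ≤ ·) ∧ List.Forall₂ (· ≤ ·) w' u) ↔
      ∀ c, cnt u c ≤ cnt s c := by
  constructor
  · rintro ⟨w', hp, _, hf⟩ c
    rw [cnt_perm hp]
    exact forall₂_cnt hf c
  · intro h
    refine ⟨List.insertionSort (· ≤ ·) s, (List.perm_insertionSort _ s).symm,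
      List.pairwise_insertionSort _ s, ?_⟩
    set w' := List.insertionSort (· ≤ ·) s with hw'
    have hperm : s.Perm w' := (List.perm_insertionSort _ s).symm
    have hwlen : w'.length = u.length := by rw [← hperm.length_eq]; exact hl
    rw [List.forall₂_iff_get]
    refine ⟨hwlen, ?_⟩
    intro i h₁ h₂
    simp only [List.get_eq_getElem]
    by_contra hcon
    push_neg at hcon
    have hA : cnt w' u[i] ≤ i := sorted_cnt_le (List.pairwise_insertionSort _ s) h₁ hcon
    have hB : i + 1 ≤ cnt u u[i] := sorted_cnt_ge hu h₂ le_rfl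
    have hC := h u[i]
    rw [cnt_perm hperm] at hC
    omega

lemma cnt_map_sub {L : List ℕ} {a : ℕ} (h : ∀ x ∈ L, a < x) (c : ℕ) :
    cnt (L.map (fun y => y - a)) c = cnt L (c + a) := by
  induction L with
  | nil => simp [cnt_nil]
  | cons x L ih =>
    simp only [List.map_cons]
    rw [cnt_cons, cnt_cons, ih (fun y hy => h y (List.mem_cons_of_mem _ hy))]
    have hx := h x (List.mem_cons_self)
    split <;> split <;> omega

lemma sorted_map_sub {L : List ℕ} (hs : L.Pairwise (· ≤ ·)) (a : ℕ) :
    (L.map (fun y => y - a)).Pairwise (· ≤ ·) :=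
  List.Pairwise.map _ (fun _ _ hxy => Nat.sub_le_sub_right hxy a) hs

lemma sum_map_eq_of_getD {α : Type*} (d : α) (L : List α) (f g : α → ℕ)
    (h : ∀ i, i < L.length → f (L.getD i d) = g (L.getD i d)) :
    (L.map f).sum = (L.map g).sum := by
  induction L with
  | nil => simp
  | cons b L ih =>
    simp only [List.map_cons, List.sum_cons]
    have h0 := h 0 (by simp)
    simp only [List.getD_cons_zero] at h0
    rw [h0, ih (fun i hi => by
      have := h (i + 1) (by simpa using Nat.succ_lt_succ hi)
      simpa only [List.getD_cons_succ] using this)]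

lemma sum_map_le_of_getD {α : Type*} (d : α) (f g : α → ℕ) :
    ∀ (L M : List α), L.length = M.length →
    (∀ i, i < L.length → f (L.getD i d) ≤ g (M.getD i d)) →
    (L.map f).sum ≤ (M.map g).sum := by
  intro L
  induction L with
  | nil => intro M hM _; cases M with
    | nil => simp
    | cons => simp at hM
  | cons b L ih =>
    intro M hM h
    cases M with
    | nil => simp at hM
    | cons c M =>
      simp only [List.map_cons, List.sum_cons]
      have h0 := h 0 (by simp)
      simp only [List.getD_cons_zero] at h0
      have := ih M (by simpa using hM) (fun i hi => by
        have := h (i + 1) (by simpa using Nat.succ_lt_succ hi)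
        simpa only [List.getD_cons_succ] using this)
      omega

lemma sum_take_succ {α : Type*} (d : α) (L : List α) (f : α → ℕ) (j : ℕ) (hj : j < L.length) :
    ((L.take (j + 1)).map f).sum = ((L.take j).map f).sum + f (L.getD j d) := by
  have h1 : (L.map f)[j]? = some (f L[j]) := by
    rw [List.getElem?_map, List.getElem?_eq_getElem hj]; rfl
  have hgd : L.getD j d = L[j] := List.getD_eq_getElem L d hj
  rw [hgd, List.map_take, List.map_take, List.take_succ, h1]
  simp

lemma sum_range_unique (f : ℕ → ℕ) (n j₀ : ℕ) (h : j₀ < n)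
    (hz : ∀ j < n, j ≠ j₀ → f j = 0) : ((List.range n).map f).sum = f j₀ := by
  induction n with
  | zero => omega
  | succ n ih =>
    rw [List.range_succ]
    simp only [List.map_append, List.sum_append, List.map_cons, List.sum_cons, List.map_nil,
      List.sum_nil]
    by_cases hj : j₀ = n
    · subst hj
      have : ((List.range j₀).map f).sum = 0 := by
        have : ∀ x ∈ (List.range j₀).map f, x = 0 := by
          intro x hx
          obtain ⟨j, hj, rfl⟩ := List.mem_map.1 hx
          exact hz j (by simp at hj; omega) (by simp at hj; omega)
        exact List.sum_eq_zero this
      omega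
    · rw [ih (by omega) (fun j hji hjne => hz j (by omega) hjne), hz n (by omega) (by omega)]
      omega

lemma cnt_flatten (L : List (List ℕ)) (c : ℕ) :
    cnt L.flatten c = (L.map (fun s => cnt s c)).sum := by
  induction L with
  | nil => simp [cnt_nil]
  | cons b L ih => simp [List.flatten_cons, cnt_append, ih]

lemma isPFL_iff (u s : List ℕ) (hu : u.Pairwise (· ≤ ·)) (hl : s.length = u.length) :
    IsPFL u s ↔ ((∀ x ∈ s, 0 < x) ∧ ∀ c, cnt u c ≤ cnt s c) := by
  unfold IsPFL
  rw [cnt_exists_sorted u s hu hl]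

lemma sorted_getD_mono {v : List ℕ} (hs : v.Pairwise (· ≤ ·)) {i j : ℕ} (hij : i ≤ j)
    (hj : j < v.length) : v.getD i 0 ≤ v.getD j 0 := by
  have hi : i < v.length := lt_of_le_of_lt hij hj
  rw [List.getD_eq_getElem v 0 hi, List.getD_eq_getElem v 0 hj]
  rcases Nat.eq_or_lt_of_le hij with rfl | hlt
  · exact le_rfl
  · exact hs.rel_get_of_lt (a := ⟨i, hi⟩) (b := ⟨j, hj⟩) hlt

lemma interleave_length (v : List ℕ) : ∀ (B : List (List ℕ)), B.length = v.length + 1 →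
    (interleave B v).length = (B.map List.length).sum + v.length := by
  induction v with
  | nil =>
    rintro (_ | ⟨b, B⟩) hB
    · simp at hB
    · have : B = [] := by simpa using hB
      subst this; simp [_root_.interleave]
  | cons x v ih =>
    rintro (_ | ⟨b, B⟩) hB
    · simp at hB
    · show (b ++ x :: interleave B v).length = _
      rw [List.length_append, List.length_cons, ih B (by simpa using hB)]
      simp; omega

lemma interleave_cnt (v : List ℕ) : ∀ (B : List (List ℕ)), B.length = v.length + 1 →
    ∀ c, cnt (interleave B v) c = (B.map (fun b => cnt b c)).sum + cnt v c := by
  induction v with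
  | nil =>
    rintro (_ | ⟨b, B⟩) hB c
    · simp at hB
    · have : B = [] := by simpa using hB
      subst this; simp [_root_.interleave, cnt_nil]
  | cons x v ih =>
    rintro (_ | ⟨b, B⟩) hB c
    · simp at hB
    · show cnt (b ++ x :: interleave B v) c = _
      rw [cnt_append, cnt_cons, ih B (by simpa using hB) c]
      simp only [List.map_cons, List.sum_cons, cnt_cons]
      omega

lemma interleave_sublist_getD (v : List ℕ) : ∀ (B : List (List ℕ)), B.length = v.length + 1 →
    ∀ j, j < B.length → (B.getD j []) <+ interleave B v := by
  induction v with
  | nil =>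
    rintro (_ | ⟨b, B⟩) hB j hj
    · simp at hB
    · have : B = [] := by simpa using hB
      subst this
      have hj0 : j = 0 := by simp at hj; omega
      subst hj0
      simp [_root_.interleave]
  | cons x v ih =>
    rintro (_ | ⟨b, B⟩) hB j hj
    · simp at hB
    · show _ <+ b ++ x :: interleave B v
      rcases j with _ | j
      · exact List.sublist_append_left _ _
      · have h1 : (B.getD j []) <+ interleave B v :=
          ih B (by simpa using hB) j (by simpa using Nat.lt_of_succ_lt_succ hj)
      
        calc (b :: B : List (List ℕ)).getD (j+1) [] = B.getD j [] := by simp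
        _ <+ interleave B v := h1
        _ <+ x :: interleave B v := List.sublist_cons_self _ _
        _ <+ b ++ x :: interleave B v := List.sublist_append_right _ _

lemma interleave_sublist_v (v : List ℕ) : ∀ (B : List (List ℕ)), B.length = v.length + 1 →
    v <+ interleave B v := by
  induction v with
  | nil => intro B hB; simp
  | cons x v ih =>
    rintro (_ | ⟨b, B⟩) hB
    · simp at hB
    · show x :: v <+ b ++ x :: interleave B v
      exact List.Sublist.trans
        (List.Sublist.cons₂ x (ih B (by simpa using hB)))
        (List.sublist_append_right _ _)

lemma interleave_bounds (v : List ℕ) : ∀ (B : List (List ℕ)), B.length = v.length + 1 →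
    (interleave B v).Pairwise (· < ·) →
    ∀ j, j < B.length → ∀ x ∈ B.getD j [],
      (1 ≤ j → v.getD (j - 1) 0 < x) ∧ (j < v.length → x < v.getD j 0) := by
  induction v with
  | nil =>
    rintro (_ | ⟨b, B⟩) hB hu j hj x hx
    · simp at hB
    · have : B = [] := by simpa using hB
      subst this
      have hj0 : j = 0 := by simp at hj; omega
      subst hj0
      exact ⟨by omega, by simp⟩
  | cons y v ih =>
    rintro (_ | ⟨b, B⟩) hB hu j hj x hx
    · simp at hB
    · have hu' : (b ++ y :: interleave B v).Pairwise (· < ·) := hu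
      rw [List.pairwise_append] at hu'
      obtain ⟨hsb, hsrest, hcross⟩ := hu'
      rw [List.pairwise_cons] at hsrest
      obtain ⟨hy, hsint⟩ := hsrest
      have hB' : B.length = v.length + 1 := by simpa using hB
      rcases j with _ | j
      · simp only [List.getD_cons_zero] at hx
        refine ⟨by omega, fun _ => ?_⟩
        simpa using hcross x hx y (List.mem_cons_self)
      · simp only [List.getD_cons_succ] at hx
        have hIH := ih B hB' hsint j (by simpa using Nat.lt_of_succ_lt_succ hj) x hx
        constructor
        · intro _
          rcases j with _ | j
          · -- bound is y; x ∈ B.getD 0 ⊆ interleave B v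
            have hmem : x ∈ interleave B v :=
              (interleave_sublist_getD v B hB' 0 (by omega)).mem hx
            simpa using hy x hmem
          · have := hIH.1 (by omega)
            simpa using this
        · intro hjv
          have := hIH.2 (by simpa using Nat.lt_of_succ_lt_succ hjv)
          simpa using this

lemma interleave_cnt_sep (B : List (List ℕ)) (v : List ℕ) (hB : B.length = v.length + 1)
    (hu : (interleave B v).Pairwise (· < ·)) (s : ℕ) (hs : s < v.length) :
    cnt (interleave B v) (v.getD s 0) =
      ((B.take (s + 1)).map List.length).sum + (s + 1) := by
  have hvs : v.Pairwise (· < ·) :=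
    List.Pairwise.sublist (interleave_sublist_v v B hB) hu
  have hvle : v.Pairwise (· ≤ ·) := hvs.imp le_of_lt
  set c := v.getD s 0 with hc
  rw [interleave_cnt v B hB c]
  have hcv : cnt v c = s + 1 := by
    rw [hc, List.getD_eq_getElem v 0 hs]
    exact sorted_lt_cnt_self hvs hs
  have hsplit : (B.map (fun b => cnt b c)).sum =
      ((B.take (s+1)).map (fun b => cnt b c)).sum +
      ((B.drop (s+1)).map (fun b => cnt b c)).sum := by
    conv_lhs => rw [← List.take_append_drop (s+1) B]
    rw [List.map_append, List.sum_append]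
  have htakelen : (B.take (s+1)).length = s + 1 := by
    rw [List.length_take]; omega
  have htake : ((B.take (s+1)).map (fun b => cnt b c)).sum =
      ((B.take (s+1)).map List.length).sum := by
    apply sum_map_eq_of_getD ([] : List ℕ)
    intro i hi
    rw [htakelen] at hi
    have hiB : i < B.length := by omega
    have hgd : (B.take (s+1)).getD i [] = B.getD i [] := by
      rw [List.getD_eq_getElem _ [] (by rw [htakelen]; omega),
        List.getD_eq_getElem _ [] hiB, List.getElem_take]
    rw [hgd]
    apply cnt_eq_length
    intro x hx
    have hb := interleave_bounds v B hB hu i hiB x hx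
    have hx2 := hb.2 (by omega)
    have : v.getD i 0 ≤ c := sorted_getD_mono hvle (by omega) hs
    omega
  have hdrop : ((B.drop (s+1)).map (fun b => cnt b c)).sum = 0 := by
    apply List.sum_eq_zero
    intro x hx
    obtain ⟨b, hb, rfl⟩ := List.mem_map.1 hx
    obtain ⟨i, hi, rfl⟩ := List.mem_iff_getElem.1 hb
    have hlendrop : i + (s+1) < B.length := by
      have : (B.drop (s+1)).length = B.length - (s+1) := List.length_drop; omega
    have hgd : (B.drop (s+1))[i] = B.getD (s + 1 + i) [] := by
      rw [List.getElem_drop, List.getD_eq_getElem _ [] (by omega)]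
    rw [hgd]
    apply cnt_eq_zero
    intro x hx
    have hbd := (interleave_bounds v B hB hu (s+1+i) (by omega) x hx).1 (by omega)
    have : c ≤ v.getD (s + 1 + i - 1) 0 := by
      rw [hc]
      exact sorted_getD_mono hvle (by omega) (by simp; omega)
    omega
  omega

lemma countP_interval (t : List ℕ) (a c : ℕ) (h : a ≤ c) :
    t.countP (fun x => decide (a < x) && decide (x ≤ c)) + cnt t a = cnt t c := by
  induction t with
  | nil => simp [cnt_nil]
  | cons x t ih =>
    rw [List.countP_cons, cnt_cons, cnt_cons]
    by_cases h1 : a < x <;> by_cases h2 : x ≤ c <;> by_cases h3 : x ≤ a <;>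
      simp [h1, h2, h3] <;> omega

lemma countP_gt (t : List ℕ) (a : ℕ) :
    t.countP (fun x => decide (a < x)) + cnt t a = t.length := by
  induction t with
  | nil => simp [cnt_nil]
  | cons x t ih =>
    rw [List.countP_cons, cnt_cons, List.length_cons]
    by_cases h1 : a < x <;> by_cases h3 : x ≤ a <;> simp [h1, h3] <;> omega

lemma sum_map_eq_of_getD₂ {α : Type*} (d : α) (f g : α → ℕ) :
    ∀ (L M : List α), L.length = M.length →
    (∀ i, i < L.length → f (L.getD i d) = g (M.getD i d)) →
    (L.map f).sum = (M.map g).sum := by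
  intro L
  induction L with
  | nil =>
    intro M hM _
    cases M with
    | nil => simp
    | cons => simp at hM
  | cons b L ih =>
    intro M hM h
    cases M with
    | nil => simp at hM
    | cons c M =>
      simp only [List.map_cons, List.sum_cons]
      have h0 := h 0 (by simp)
      simp only [List.getD_cons_zero] at h0
      rw [h0, ih M (by simpa using hM) (fun i hi => by
        have := h (i + 1) (by simpa using Nat.succ_lt_succ hi)
        simpa only [List.getD_cons_succ] using this)]

lemma drop_eq_getD_singleton {α : Type*} (d : α) (B : List α) (l : ℕ) (h : B.length = l + 1) :
    B.drop l = [B.getD l d] := by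
  have hl : l < B.length := by omega
  rw [List.drop_eq_getElem_cons hl, List.getD_eq_getElem B d hl]
  have : B.drop (l + 1) = [] := List.drop_eq_nil_of_le (by omega)
  rw [this]

def sep (v : List ℕ) (j : ℕ) : ℕ := if j = 0 then 0 else v.getD (j - 1) 0

def blockP (v : List ℕ) (j x : ℕ) : Bool :=
  decide (sep v j < x) && (decide (v.length ≤ j) || decide (x ≤ v.getD j 0))

/-- Theorem (multi-shuffle characterization): given `v = (u_{k₁},...,u_{k_l})` sitting at
positions `k₁ < ⋯ < k_l` of the strictly increasing vector `u`, the set of non-decreasing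
`l`-tuples `w` making `(w, t)` a `u`-parking function equals the lower set `[v]`
if and only if `t ∈ MS(v)`. -/
theorem multishuffle_characterization (u v t : List ℕ)
    (hu : u.Pairwise (· < ·)) (hupos : ∀ x ∈ u, 0 < x)
    (hlen : v.length + t.length = u.length)
    (hv : ∃ B : List (List ℕ), B.length = v.length + 1 ∧ u = interleave B v) :
    (∀ w : List ℕ, w.length = v.length → w.Pairwise (· ≤ ·) → (∀ x ∈ w, 0 < x) →
        (IsPFL u (w ++ t) ↔ ∀ i < v.length, w.getD i 0 ≤ v.getD i 0)) ↔
      MShuffle u v t := by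
  have hule : u.Pairwise (· ≤ ·) := hu.imp le_of_lt
  constructor
  · intro H
    obtain ⟨B, hB, huI⟩ := hv
    have huint : (interleave B v).Pairwise (· < ·) := huI ▸ hu
    have hvsort : v.Pairwise (· < ·) :=
      List.Pairwise.sublist (interleave_sublist_v v B hB) huint
    have hvle : v.Pairwise (· ≤ ·) := hvsort.imp le_of_lt
    have hvpos : ∀ x ∈ v, 0 < x := fun x hx =>
      hupos x (huI ▸ (interleave_sublist_v v B hB).subset hx)
    have hPFv : IsPFL u (v ++ t) :=
      (H v rfl hvle hvpos).2 (fun i hi => le_rfl)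
    have hvtlen : (v ++ t).length = u.length := by rw [List.length_append]; omega
    rw [isPFL_iff u (v ++ t) hule hvtlen] at hPFv
    obtain ⟨hposvt, hPv⟩ := hPFv
    have htpos : ∀ x ∈ t, 0 < x := fun x hx => hposvt x (List.mem_append.2 (Or.inr hx))
    have hP : ∀ c, cnt u c ≤ cnt v c + cnt t c := fun c => by
      have := hPv c; rwa [cnt_append] at this
    have hE : ∀ s, s < v.length →
        cnt t (v.getD s 0) = ((B.take (s+1)).map List.length).sum := by
      intro s hs
      set c := v.getD s 0 with hc
      have hvdec : v = v.take s ++ c :: v.drop (s+1) := by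
        conv_lhs => rw [← List.take_append_drop s v]
        rw [List.drop_eq_getElem_cons hs, ← List.getD_eq_getElem v 0 hs]
      set w' := v.take s ++ (c+1) :: v.drop (s+1) with hw'
      have hlentake : (v.take s).length = s := by rw [List.length_take]; omega
      have hwlen : w'.length = v.length := by
        rw [hw', List.length_append, List.length_cons, hlentake, List.length_drop]; omega
      have hvs2 : List.Pairwise (· < ·) (v.take s ++ c :: v.drop (s+1)) := by
        rw [← hvdec]; exact hvsort
      rw [List.pairwise_append] at hvs2
      obtain ⟨ht1, ht2, ht3⟩ := hvs2
      rw [List.pairwise_cons] at ht2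
      obtain ⟨ht2a, ht2b⟩ := ht2
      have hwsorted : w'.Pairwise (· ≤ ·) := by
        rw [hw', List.pairwise_append]
        refine ⟨ht1.imp le_of_lt, ?_, ?_⟩
        · rw [List.pairwise_cons]
          exact ⟨fun y hy => by have := ht2a y hy; omega, ht2b.imp le_of_lt⟩
        · intro x hx y hy
          rcases List.mem_cons.1 hy with rfl | hy
          · have := ht3 x hx c (List.mem_cons_self); omega
          · have := ht3 x hx y (List.mem_cons.2 (Or.inr hy)); omega
      have hwpos : ∀ x ∈ w', 0 < x := by
        intro x hx
        rw [hw'] at hx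
        rcases List.mem_append.1 hx with h | h
        · exact hvpos x (List.mem_of_mem_take h)
        · rcases List.mem_cons.1 h with rfl | h
          · omega
          · exact hvpos x (List.mem_of_mem_drop h)
      have hwgetD : w'.getD s 0 = c + 1 := by
        rw [hw', List.getD_append_right _ _ _ _ (by omega), hlentake]
        simp
      have hnot : ¬ IsPFL u (w' ++ t) := by
        intro hcontra
        have := (H w' hwlen hwsorted hwpos).1 hcontra s hs
        rw [hwgetD] at this; omega
      rw [isPFL_iff u (w' ++ t) hule (by rw [List.length_append, hwlen]; omega)] at hnot
      push_neg at hnot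
      have hnot2 : ∃ c', cnt (w' ++ t) c' < cnt u c' := by
        rcases hnot (fun x hx => (List.mem_append.1 hx).elim (hwpos x) (htpos x))
          with ⟨c', hc'⟩
        exact ⟨c', by omega⟩
      obtain ⟨c', hc'⟩ := hnot2
      rw [cnt_append] at hc'
      have hPc' := hP c'
      have hcv : cnt v c' = cnt (v.take s) c' + (if c ≤ c' then 1 else 0) +
          cnt (v.drop (s+1)) c' := by
        conv_lhs => rw [hvdec]
        rw [cnt_append, cnt_cons]; omega
      have hcw : cnt w' c' = cnt (v.take s) c' + (if c + 1 ≤ c' then 1 else 0) +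
          cnt (v.drop (s+1)) c' := by
        rw [hw', cnt_append, cnt_cons]; omega
      have hceq : c' = c := by
        by_contra hne
        have : cnt v c' ≤ cnt w' c' := by
          rw [hcv, hcw]
          have : (if c ≤ c' then 1 else 0) ≤ (if c + 1 ≤ c' then (1:ℕ) else 0) := by
            split_ifs <;> omega
          omega
        omega
      subst hceq
      have h5 : cnt (v.take s) c = s := by
        have := cnt_eq_length (v.take s) c
          (fun x hx => le_of_lt (ht3 x hx c (List.mem_cons_self)))
        rw [this, hlentake]
      have h6 : cnt (v.drop (s+1)) c = 0 := cnt_eq_zero _ _ (fun y hy => ht2a y hy)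
      have h7 : cnt u c = ((B.take (s+1)).map List.length).sum + (s+1) := by
        rw [huI]; exact interleave_cnt_sep B v hB huint s hs
      rw [hcw, h5, h6, if_neg (by omega)] at hc'
      rw [hcv, h5, h6, if_pos (by omega)] at hPc'
      omega
    have hcnt0 : cnt t 0 = 0 := cnt_eq_zero _ _ htpos
    have hTlen : t.length = (B.map List.length).sum := by
      have := interleave_length v B hB
      rw [← huI] at this; omega
    set ws : List (List ℕ) :=
      (List.range (v.length+1)).map (fun j => t.filter (blockP v j)) with hws
    have hwsgd : ∀ j, j < v.length + 1 → ws.getD j [] = t.filter (blockP v j) := by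
      intro j hj
      rw [hws, List.getD_eq_getElem _ [] (by simpa using hj), List.getElem_map,
        List.getElem_range]
    have hBgtj : ∀ j, j < v.length + 1 → ∀ x ∈ B.getD j [], sep v j < x := by
      intro j hj x hx
      by_cases h0 : j = 0
      · subst h0
        show (if 0 = 0 then 0 else _) < x
        rw [if_pos rfl]
        exact hupos x (huI ▸ (interleave_sublist_getD v B hB 0 (by omega)).subset hx)
      · show (if j = 0 then 0 else v.getD (j-1) 0) < x
        rw [if_neg h0]
        exact (interleave_bounds v B hB huint j (by omega) x hx).1 (by omega)
    have hSlen : ∀ j, j < v.length + 1 →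
        cnt t (sep v j) = ((B.take j).map List.length).sum := by
      intro j hj
      by_cases h0 : j = 0
      · subst h0
        show cnt t (if 0 = 0 then 0 else _) = _
        rw [if_pos rfl]
        simpa using hcnt0
      · show cnt t (if j = 0 then 0 else v.getD (j-1) 0) = _
        rw [if_neg h0]
        have h1 := hE (j-1) (by omega)
        have hjj : j - 1 + 1 = j := by omega
        rwa [hjj] at h1
    have hsep_le : ∀ j, j < v.length → sep v j ≤ v.getD j 0 := by
      intro j hj
      by_cases h0 : j = 0
      · subst h0; show (if 0 = 0 then 0 else _) ≤ _; simp
      · show (if j = 0 then 0 else v.getD (j-1) 0) ≤ _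
        rw [if_neg h0]
        exact sorted_getD_mono hvle (by omega) hj
    have hflen : ∀ j, j < v.length + 1 →
        (t.filter (blockP v j)).length = (B.getD j []).length := by
      intro j hj
      rw [← List.countP_eq_length_filter]
      by_cases hjl : j < v.length
      · have hpeq : ∀ x ∈ t, blockP v j x =
            (decide (sep v j < x) && decide (x ≤ v.getD j 0)) := by
          intro x _
          unfold blockP
          rw [decide_eq_false (by omega : ¬ v.length ≤ j)]
          simp
        rw [List.countP_congr (fun x hx => by rw [hpeq x hx])]
        have h1 := countP_interval t _ _ (hsep_le j hjl)
        have h2 := hSlen j hj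
        have h3 : cnt t (v.getD j 0) = ((B.take (j+1)).map List.length).sum := hE j hjl
        have h4 := sum_take_succ ([] : List ℕ) B List.length j (by omega)
        omega
      · have hpeq : ∀ x ∈ t, blockP v j x = decide (sep v j < x) := by
          intro x _
          unfold blockP
          rw [decide_eq_true (by omega : v.length ≤ j)]
          simp
        rw [List.countP_congr (fun x hx => by rw [hpeq x hx])]
        have h1 := countP_gt t (sep v j)
        have h2 := hSlen j hj
        have h4 : (B.map List.length).sum =
            ((B.take j).map List.length).sum + (B.getD j []).length := by
          conv_lhs => rw [← List.take_append_drop j B]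
          rw [drop_eq_getD_singleton [] B j (by omega), List.map_append, List.sum_append]
          simp
        omega
    have hchain : ∀ j, j < v.length + 1 → ∀ c, sep v j ≤ c →
        ((B.take j).map List.length).sum + cnt (B.getD j []) c ≤ cnt t c := by
      intro j hj c hca
      have h1 := hP c
      have h2 : cnt u c = (B.map (fun b => cnt b c)).sum + cnt v c := by
        rw [huI]; exact interleave_cnt v B hB c
      have h3 : (B.map (fun b => cnt b c)).sum =
          ((B.take j).map (fun b => cnt b c)).sum +
          ((B.drop j).map (fun b => cnt b c)).sum := by
        conv_lhs => rw [← List.take_append_drop j B]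
        rw [List.map_append, List.sum_append]
      have h4 : ((B.take j).map (fun b => cnt b c)).sum =
          ((B.take j).map List.length).sum := by
        apply sum_map_eq_of_getD ([] : List ℕ)
        intro i hi
        rw [List.length_take] at hi
        have hij : i < j := by omega
        have hiB : i < B.length := by omega
        have hgd : (B.take j).getD i [] = B.getD i [] := by
          rw [List.getD_eq_getElem _ [] (by rw [List.length_take]; omega),
            List.getD_eq_getElem _ [] hiB, List.getElem_take]
        rw [hgd]
        apply cnt_eq_length
        intro x hx
        have hlt := (interleave_bounds v B hB huint i (by omega) x hx).2 (by omega)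
        have hmono : v.getD i 0 ≤ v.getD (j-1) 0 :=
          sorted_getD_mono hvle (by omega) (by omega)
        have haa : sep v j = v.getD (j-1) 0 := by
          show (if j = 0 then 0 else _) = _
          rw [if_neg (by omega)]
        omega
      have h5 : cnt (B.getD j []) c ≤ ((B.drop j).map (fun b => cnt b c)).sum := by
        have hdec : B.drop j = B.getD j [] :: B.drop (j+1) := by
          rw [List.drop_eq_getElem_cons (by omega : j < B.length),
            List.getD_eq_getElem B [] (by omega)]
        rw [hdec, List.map_cons, List.sum_cons]
        omega
      omega
    have hbcnt : ∀ j, j < v.length + 1 → ∀ c,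
        cnt (B.getD j []) c ≤ cnt (t.filter (blockP v j)) c := by
      intro j hj c
      by_cases hca : sep v j ≤ c
      · by_cases hjl : j < v.length
        · by_cases hcase : c ≤ v.getD j 0
          · have hfilt : cnt (t.filter (blockP v j)) c =
                t.countP (fun x => decide (sep v j < x) && decide (x ≤ c)) := by
              rw [cnt, List.countP_filter]
              apply List.countP_congr
              intro x _
              unfold blockP
              rw [decide_eq_false (by omega : ¬ v.length ≤ j)]
              simp only [Bool.false_or, Bool.and_eq_true, decide_eq_true_eq]
              constructor
              · rintro ⟨h1, h2, _⟩; exact ⟨h2, h1⟩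
              · rintro ⟨h1, h2⟩; exact ⟨h2, h1, by omega⟩
            have hIV := countP_interval t (sep v j) c hca
            have hch := hchain j hj c hca
            have hS := hSlen j hj
            omega
          · have hall : ∀ x ∈ t.filter (blockP v j), x ≤ c := by
              intro x hx
              rw [List.mem_filter] at hx
              have h2 := hx.2
              unfold blockP at h2
              rw [decide_eq_false (by omega : ¬ v.length ≤ j)] at h2
              simp only [Bool.false_or, Bool.and_eq_true, decide_eq_true_eq] at h2
              omega
            rw [cnt_eq_length _ _ hall, hflen j hj]
            exact cnt_le_length _ _
        · have hfilt : cnt (t.filter (blockP v j)) c =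
              t.countP (fun x => decide (sep v j < x) && decide (x ≤ c)) := by
            rw [cnt, List.countP_filter]
            apply List.countP_congr
            intro x _
            unfold blockP
            rw [decide_eq_true (by omega : v.length ≤ j)]
            simp only [Bool.true_or, Bool.and_true, Bool.and_eq_true, decide_eq_true_eq]
            exact ⟨fun ⟨a, b⟩ => ⟨b, a⟩, fun ⟨a, b⟩ => ⟨b, a⟩⟩
          have hIV := countP_interval t (sep v j) c hca
          have hch := hchain j hj c hca
          have hS := hSlen j hj
          omega
      · have hz : cnt (B.getD j []) c = 0 :=
          cnt_eq_zero _ _ (fun x hx => by have := hBgtj j hj x hx; omega)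
        omega
    have hperm : t.Perm ws.flatten := by
      rw [List.perm_iff_count]
      intro x
      rw [List.count_flatten, hws, List.map_map]
      by_cases hxt : x ∈ t
      · have hx0 : 0 < x := htpos x hxt
        obtain ⟨j₀, hj₀⟩ : ∃ n, v.countP (fun y => decide (y < x)) = n := ⟨_, rfl⟩
        have hj₀le : j₀ ≤ v.length := hj₀ ▸ List.countP_le_length
        have hqmono : ∀ {y z : ℕ}, y ≤ z → decide (y < x) = true → decide (y < x) = true :=
          fun _ h => h
        have hqmono' : ∀ {y z : ℕ}, y ≤ z → decide (z < x) = true → decide (y < x) = true :=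
          fun h hz => by simp at hz ⊢; omega
        have hlt : ∀ i, i < v.length → i < j₀ → v.getD i 0 < x := by
          intro i hi hij
          by_contra hcon
          have := sorted_countP_le _ hqmono' hvle hi
            (decide_eq_false (fun hcc => hcon (by rw [List.getD_eq_getElem v 0 hi]; exact hcc)))
          omega
        have hge : ∀ i, i < v.length → j₀ ≤ i → ¬ (v.getD i 0 < x) := by
          intro i hi hij hcon
          have := sorted_countP_ge _ hqmono' hvle hi
            (decide_eq_true (show v[i] < x by rw [← List.getD_eq_getElem v 0 hi]; exact hcon))
          omega
        have hpj₀ : blockP v j₀ x = true := by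
          unfold blockP
          have hsep : sep v j₀ < x := by
            by_cases h0 : j₀ = 0
            · subst h0; show (if 0 = 0 then 0 else _) < x; simpa using hx0
            · show (if j₀ = 0 then 0 else _) < x
              rw [if_neg h0]
              exact hlt (j₀ - 1) (by omega) (by omega)
          by_cases hjl : j₀ < v.length
          · have hxle : x ≤ v.getD j₀ 0 := by have := hge j₀ hjl le_rfl; omega
            rw [decide_eq_true hsep, decide_eq_true hxle]; simp
          · rw [decide_eq_true hsep, decide_eq_true (by omega : v.length ≤ j₀)]; simp
        have hpother : ∀ j, j < v.length + 1 → j ≠ j₀ → blockP v j x = false := by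
          intro j hj hne
          unfold blockP
          rcases Nat.lt_or_ge j j₀ with hlt' | hge'
          · have h1 : v.getD j 0 < x := hlt j (by omega) hlt'
            rw [decide_eq_false (by omega : ¬ v.length ≤ j),
              decide_eq_false (by omega : ¬ x ≤ v.getD j 0)]
            simp
          · have hj1 : j₀ ≤ j - 1 := by omega
            have hsep : ¬ sep v j < x := by
              show ¬ (if j = 0 then 0 else v.getD (j-1) 0) < x
              rw [if_neg (by omega)]
              exact hge (j-1) (by omega) hj1
            rw [decide_eq_false hsep]
            simp
        have hz : ∀ j, j < v.length + 1 → j ≠ j₀ →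
            List.count x (t.filter (blockP v j)) = 0 := by
          intro j hj hne
          apply List.count_eq_zero.2
          intro hmem
          have h2 := (List.mem_filter.1 hmem).2
          rw [hpother j hj hne] at h2
          exact absurd h2 (by simp)
        have hsum := sum_range_unique (fun j => List.count x (t.filter (blockP v j)))
          (v.length + 1) j₀ (by omega) (fun j hj hne => hz j hj hne)
        calc List.count x t = List.count x (t.filter (blockP v j₀)) :=
              (List.count_filter hpj₀).symm
        _ = ((List.range (v.length + 1)).map
              (fun j => List.count x (t.filter (blockP v j)))).sum := hsum.symm
        _ = ((List.range (v.length + 1)).map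
              ((fun L => List.count x L) ∘ fun j => t.filter (blockP v j))).sum := rfl
      · rw [List.count_eq_zero.2 hxt]
        symm
        apply List.sum_eq_zero
        intro y hy
        obtain ⟨j, hj, rfl⟩ := List.mem_map.1 hy
        apply List.count_eq_zero.2
        intro hmem
        exact hxt (List.mem_filter.1 (by simpa using hmem)).1
    refine ⟨B, ws, hB, by rw [hws]; simp, huI, ?_, hperm⟩
    intro j hj
    have hgd := hwsgd j hj
    have hfgt : ∀ x ∈ t.filter (blockP v j), sep v j < x := by
      intro x hx
      have h2 := (List.mem_filter.1 hx).2
      unfold blockP at h2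
      simp only [Bool.and_eq_true, decide_eq_true_eq] at h2
      exact h2.1
    constructor
    · intro x hx
      rw [hgd] at hx
      exact hfgt x hx
    · rw [hgd]
      have hBsort : (B.getD j []).Pairwise (· < ·) :=
        List.Pairwise.sublist (interleave_sublist_getD v B hB j (by omega)) huint
      refine (isPFL_iff _ _ ?_ ?_).2 ⟨?_, ?_⟩
      · exact sorted_map_sub (hBsort.imp le_of_lt) _
      · rw [List.length_map, List.length_map]
        exact hflen j hj
      · intro x hx
        obtain ⟨y, hy, rfl⟩ := List.mem_map.1 hx
        have h1 := hfgt y hy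
        have hsd : sep v j = (if j = 0 then 0 else v.getD (j - 1) 0) := rfl
        omega
      · intro c
        show cnt ((B.getD j []).map (fun y => y - sep v j)) c ≤
          cnt ((t.filter (blockP v j)).map (fun y => y - sep v j)) c
        rw [cnt_map_sub (hBgtj j hj), cnt_map_sub hfgt]
        exact hbcnt j hj _
  · rintro ⟨B, ws, hB, hwsl, huI, hcond, hperm⟩
    have huint : (interleave B v).Pairwise (· < ·) := huI ▸ hu
    have hvsort : v.Pairwise (· < ·) :=
      List.Pairwise.sublist (interleave_sublist_v v B hB) huint
    have hvle : v.Pairwise (· ≤ ·) := hvsort.imp le_of_lt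
    have hBgt : ∀ j, j < v.length + 1 → ∀ x ∈ B.getD j [],
        (if j = 0 then 0 else v.getD (j - 1) 0) < x := by
      intro j hj x hx
      by_cases h0 : j = 0
      · subst h0
        simp only [if_pos rfl]
        have hxu : x ∈ interleave B v :=
          (interleave_sublist_getD v B hB 0 (by omega)).subset hx
        exact hupos x (huI ▸ hxu)
      · have := (interleave_bounds v B hB huint j (by omega) x hx).1 (by omega)
        simpa [h0] using this
    have hkey : ∀ j, j < v.length + 1 →
        ((ws.getD j []).length = (B.getD j []).length ∧
         (∀ c, cnt (B.getD j []) c ≤ cnt (ws.getD j []) c)) := by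
      intro j hj
      obtain ⟨hgt, hpf⟩ := hcond j hj
      obtain ⟨hpos', w', hp', hs', hf'⟩ := hpf
      have hlenj : (ws.getD j []).length = (B.getD j []).length := by
        have h1 := hf'.length_eq
        have h2 := hp'.length_eq
        simp only [List.length_map] at h1 h2
        omega
      refine ⟨hlenj, fun c => ?_⟩
      by_cases hc : (if j = 0 then 0 else v.getD (j - 1) 0) ≤ c
      · have e1 : cnt ((B.getD j []).map
            (fun y => y - (if j = 0 then 0 else v.getD (j - 1) 0)))
            (c - (if j = 0 then 0 else v.getD (j - 1) 0)) = cnt (B.getD j []) c := by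
          rw [cnt_map_sub (hBgt j hj)]; congr 1; omega
        have e2 : cnt ((ws.getD j []).map
            (fun y => y - (if j = 0 then 0 else v.getD (j - 1) 0)))
            (c - (if j = 0 then 0 else v.getD (j - 1) 0)) = cnt (ws.getD j []) c := by
          rw [cnt_map_sub hgt]; congr 1; omega
        have e3 : cnt ((ws.getD j []).map
            (fun y => y - (if j = 0 then 0 else v.getD (j - 1) 0)))
            (c - (if j = 0 then 0 else v.getD (j - 1) 0)) =
            cnt w' (c - (if j = 0 then 0 else v.getD (j - 1) 0)) := cnt_perm hp' _
        have e4 := forall₂_cnt hf' (c - (if j = 0 then 0 else v.getD (j - 1) 0))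
        omega
      · have hz : cnt (B.getD j []) c = 0 :=
          cnt_eq_zero _ _ (fun x hx => by have := hBgt j hj x hx; omega)
        omega
    have hup : ∀ j, j < v.length → ∀ x ∈ ws.getD j [], x < v.getD j 0 := by
      intro j hj x hx
      have hBlt : ∀ y ∈ B.getD j [], y < v.getD j 0 := fun y hy =>
        (interleave_bounds v B hB huint j (by omega) y hy).2 hj
      obtain ⟨hlenj, hcnt⟩ := hkey j (by omega)
      have h1 : cnt (B.getD j []) (v.getD j 0 - 1) = (B.getD j []).length :=
        cnt_eq_length _ _ (fun y hy => by have := hBlt y hy; omega)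
      have h2 := hcnt (v.getD j 0 - 1)
      have h3 := all_le_of_cnt_ge (ws.getD j []) (v.getD j 0 - 1) (by omega) x hx
      have hvpos : 0 < v.getD j 0 := by
        have hm : v.getD j 0 ∈ v := by
          rw [List.getD_eq_getElem v 0 hj]; exact List.getElem_mem _
        exact hupos _ (huI ▸ (interleave_sublist_v v B hB).subset hm)
      omega
    have htpos : ∀ x ∈ t, 0 < x := by
      intro x hx
      obtain ⟨L, hL, hxL⟩ := List.mem_flatten.1 (hperm.subset hx)
      obtain ⟨j, hj, rfl⟩ := List.mem_iff_getElem.1 hL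
      have hjl : j < v.length + 1 := by omega
      have hgd : ws.getD j [] = ws[j] := List.getD_eq_getElem ws [] hj
      exact lt_of_le_of_lt (Nat.zero_le _)
        ((hcond j hjl).1 x (by rw [hgd]; exact hxL))
    have hcntT : ∀ c, (B.map (fun b => cnt b c)).sum ≤ cnt t c := by
      intro c
      rw [cnt_perm hperm, cnt_flatten]
      exact sum_map_le_of_getD [] _ _ B ws (by omega)
        (fun j hj => (hkey j (by omega)).2 c)
    intro w hwl hws hwp
    have hwtlen : (w ++ t).length = u.length := by
      rw [List.length_append, hwl]; omega
    rw [isPFL_iff u (w ++ t) hule hwtlen]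
    constructor
    · rintro ⟨hpos, hcntU⟩
      by_contra hcon
      push_neg at hcon
      obtain ⟨s, hsl, hsgt⟩ := hcon
      set c := v.getD s 0 with hc
      have h1 : cnt u c ≤ cnt w c + cnt t c := by
        have := hcntU c; rwa [cnt_append] at this
      have h2 : cnt w c ≤ s := by
        apply sorted_cnt_le hws (show s < w.length by omega)
        rw [← List.getD_eq_getElem w 0 (by omega)]
        omega
      have h4 : cnt u c = ((B.take (s+1)).map List.length).sum + (s+1) := by
        rw [huI]; exact interleave_cnt_sep B v hB huint s hsl
      have h3 : cnt t c = ((B.take (s+1)).map List.length).sum := by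
        rw [cnt_perm hperm, cnt_flatten]
        have hsplit : (ws.map (fun b => cnt b c)).sum =
            ((ws.take (s+1)).map (fun b => cnt b c)).sum +
            ((ws.drop (s+1)).map (fun b => cnt b c)).sum := by
          conv_lhs => rw [← List.take_append_drop (s+1) ws]
          rw [List.map_append, List.sum_append]
        have htake : ((ws.take (s+1)).map (fun b => cnt b c)).sum =
            ((B.take (s+1)).map List.length).sum := by
          apply sum_map_eq_of_getD₂ []
          · rw [List.length_take, List.length_take]; omega
          · intro i hi
            rw [List.length_take] at hi
            have his : i < s + 1 := by omega
            have hiw : i < ws.length := by omega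
            have hiB : i < B.length := by omega
            have hgd1 : (ws.take (s+1)).getD i [] = ws.getD i [] := by
              rw [List.getD_eq_getElem _ [] (by rw [List.length_take]; omega),
                List.getD_eq_getElem _ [] hiw, List.getElem_take]
            have hgd2 : (B.take (s+1)).getD i [] = B.getD i [] := by
              rw [List.getD_eq_getElem _ [] (by rw [List.length_take]; omega),
                List.getD_eq_getElem _ [] hiB, List.getElem_take]
            rw [hgd1, hgd2]
            have hall : ∀ x ∈ ws.getD i [], x ≤ c := fun x hx => by
              have hx1 := hup i (by omega) x hx
              have hx2 : v.getD i 0 ≤ c := sorted_getD_mono hvle (by omega) hsl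
              omega
            rw [cnt_eq_length _ _ hall, (hkey i (by omega)).1]
        have hdrop : ((ws.drop (s+1)).map (fun b => cnt b c)).sum = 0 := by
          apply List.sum_eq_zero
          intro x hx
          obtain ⟨b, hb, rfl⟩ := List.mem_map.1 hx
          obtain ⟨i, hi, rfl⟩ := List.mem_iff_getElem.1 hb
          have hlen2 : s + 1 + i < ws.length := by
            have : (ws.drop (s+1)).length = ws.length - (s+1) := List.length_drop; omega
          have hgd : (ws.drop (s+1))[i] = ws.getD (s+1+i) [] := by
            rw [List.getElem_drop, List.getD_eq_getElem _ [] (by omega)]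
          rw [hgd]
          apply cnt_eq_zero
          intro y hy
          have hgt := (hcond (s+1+i) (by omega)).1 y hy
          rw [if_neg (by omega : ¬ (s+1+i) = 0)] at hgt
          have hmono : c ≤ v.getD (s + 1 + i - 1) 0 :=
            sorted_getD_mono hvle (by omega) (by omega)
          omega
        omega
      omega
    · intro hle
      refine ⟨?_, ?_⟩
      · intro x hx
        rcases List.mem_append.1 hx with h | h
        · exact hwp x h
        · exact htpos x h
      · intro c
        rw [cnt_append]
        have e1 : cnt u c = (B.map (fun b => cnt b c)).sum + cnt v c := by
          rw [huI]; exact interleave_cnt v B hB c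
        have e2 : cnt v c ≤ cnt w c := by
          apply forall₂_cnt
          rw [List.forall₂_iff_get]
          refine ⟨hwl, fun i h1 h2 => ?_⟩
          have := hle i (by omega)
          rw [List.getD_eq_getElem w 0 h1, List.getD_eq_getElem v 0 h2] at this
          simpa using this
        have := hcntT c
        omega
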